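/- arXiv:1008.4764 — 2 statements merged into one kernel-verified Lean document; each statement's English description precedes it below -/
import Mathlib

section
/- Let {x : ⟨a_i,x⟩ + b_i ≥ 0, i = 1,…,m} and {x : ⟨a'_i,x⟩ + b'_i ≥ 0, i = 1,…,m} be generic presentations of bounded polytopes P, P' ⊆ ℝ^n with nonempty interior, and suppose K_P = K_{P'} as simplicial complexes on {1,…,m} (i.e. the polytopes are combinatorially equivalent with corresponding inequalities). Then there exists a T^m-equivariant homeomorphism Z_P → Z_{P'}. -/
/-!
`Z_P` only depends on its orbit space: it consists of the `z` whose squared moduli `(‖z i‖²)ᵢ` lie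
in the image of `P` under the affine embedding `x ↦ (⟨a i, x⟩ + b i)ᵢ`. A homeomorphism between two
such orbit spaces that preserves which coordinates vanish lifts to a `T^m`-equivariant
homeomorphism, by keeping the argument of every coordinate and prescribing its modulus.

A homeomorphism `P ≃ P'` preserving the active set of every point is built by downward induction on
the number `k` of active inequalities. Genericity gives every nonempty face `F_I` a point `c_I`
whose active set is exactly `I`; a map already defined on the points with more than `k` active
inequalities extends over each face `F_I` with `#I = k` by coning its relative boundary from `c_I`
to `c'_I`, radially with respect to the gauge of `F_I` centred at `c_I`.
-/

open Filter Topology Set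
open scoped Finset Matrix

theorem eq_zero_of_forall_add_smul_mem {E : Type*} [NormedAddCommGroup E] [NormedSpace ℝ E]
    {s : Set E} (hs : Bornology.IsBounded s) {x v : E} (h : ∀ t : ℝ, 0 ≤ t → x + t • v ∈ s) :
    v = 0 := by
  obtain ⟨R, hR⟩ := isBounded_iff_forall_norm_le.mp hs
  have hR₀ : 0 ≤ R := (norm_nonneg x).trans (by simpa using hR _ (h 0 le_rfl))
  by_contra hv
  have hv₀ : 0 < ‖v‖ := norm_pos_iff.mpr hv
  set t := (R + ‖x‖ + 1) / ‖v‖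
  have ht : 0 ≤ t := by positivity
  have hnorm : ‖t • v‖ = R + ‖x‖ + 1 := by
    rw [norm_smul, Real.norm_of_nonneg ht, div_mul_cancel₀ _ hv₀.ne']
  have := norm_sub_le (x + t • v) x
  rw [add_sub_cancel_left, hnorm] at this
  linarith [hR _ (h t ht)]

theorem Matrix.mulVec_surjective_of_linearIndependent_row {K m n : Type*} [Field K] [Fintype m]
    [Fintype n] {M : Matrix m n K} (h : LinearIndependent K M.row) :
    Function.Surjective M.mulVec :=
  LinearMap.range_eq_top.mp <| Submodule.eq_top_of_finrank_eq (V := m → K)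
    (S := LinearMap.range M.mulVecLin) <| by
    rw [Module.finrank_fintype_fun_eq_card, ← h.rank_matrix, Matrix.rank]

section FoldMax

variable {α β : Type*} [LinearOrder β] {s : Finset α} {f : α → β} {b : β}

theorem Finset.exists_mem_eq_fold_max_of_lt (h : b < s.fold max b f) :
    ∃ j ∈ s, s.fold max b f = f j := by
  classical
  induction s using Finset.induction_on with
  | empty => simp at h
  | insert a s ha ih =>
    rw [Finset.fold_insert ha] at h ⊢
    rcases max_choice (f a) (s.fold max b f) with hm | hm
    · exact ⟨a, Finset.mem_insert_self a s, hm⟩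
    · rw [hm] at h ⊢
      obtain ⟨j, hj, hje⟩ := ih h
      exact ⟨j, Finset.mem_insert_of_mem hj, hje⟩

theorem Continuous.finset_fold_max {X : Type*} [TopologicalSpace X] [TopologicalSpace β]
    [OrderClosedTopology β] {f : α → X → β} (hf : ∀ j, Continuous (f j)) :
    Continuous fun x => s.fold max b fun j => f j x := by
  classical
  induction s using Finset.induction_on with
  | empty => exact continuous_const
  | insert a s ha ih =>
    simp only [Finset.fold_insert ha]
    exact (hf a).max ih

end FoldMax

theorem Finset.fold_max_zero_mul {α : Type*} (s : Finset α) (f : α → ℝ) {t : ℝ} (ht : 0 ≤ t) :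
    (s.fold max 0 fun j => t * f j) = t * s.fold max 0 f := by
  simpa using Finset.fold_hom (op := max) (op' := max) (m := (t * ·)) (b := 0) (s := s) (f := f)
    fun x y => mul_max_of_nonneg x y ht

/-- `rescale r ζ` has modulus `r` and the argument of `ζ`; since `r / 0 = 0` in Lean,
`rescale r 0 = 0`. -/
noncomputable def rescale (r : ℝ) (ζ : ℂ) : ℂ := ((r / ‖ζ‖ : ℝ) : ℂ) * ζ

section Rescale

variable {r s : ℝ} {ζ t : ℂ}

@[simp]
theorem rescale_zero_right : rescale r 0 = 0 := by simp [rescale]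

theorem norm_rescale (hr : 0 ≤ r) (h : ζ = 0 → r = 0) : ‖rescale r ζ‖ = r := by
  rcases eq_or_ne ζ 0 with rfl | hζ
  · simp [h rfl]
  · rw [rescale, norm_mul, Complex.norm_real, Real.norm_of_nonneg (by positivity),
      div_mul_cancel₀ _ (norm_ne_zero_iff.mpr hζ)]

theorem norm_rescale_le : ‖rescale r ζ‖ ≤ |r| := by
  rcases eq_or_ne ζ 0 with rfl | hζ
  · simp
  · rw [rescale, norm_mul, Complex.norm_real, Real.norm_eq_abs, abs_div, abs_norm,
      div_mul_cancel₀ _ (norm_ne_zero_iff.mpr hζ)]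

theorem rescale_norm_self : rescale ‖ζ‖ ζ = ζ := by
  rcases eq_or_ne ζ 0 with rfl | hζ
  · simp
  · rw [rescale, div_self (norm_ne_zero_iff.mpr hζ), Complex.ofReal_one, one_mul]

theorem rescale_rescale (hr : 0 ≤ r) (h : r = 0 → s = 0) :
    rescale s (rescale r ζ) = rescale s ζ := by
  rcases eq_or_ne ζ 0 with rfl | hζ
  · simp
  rcases hr.eq_or_lt with rfl | hr
  · simp [rescale, h rfl]
  rw [rescale, norm_rescale hr.le (fun h => absurd h hζ), rescale, rescale, ← mul_assoc,
    ← Complex.ofReal_mul]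
  congr 2
  field_simp

theorem rescale_mul (ht : ‖t‖ = 1) : rescale r (t * ζ) = t * rescale r ζ := by
  simp only [rescale, norm_mul, ht, one_mul]
  ring

theorem continuousOn_rescale :
    ContinuousOn (fun p : ℝ × ℂ => rescale p.1 p.2) {p | p.2 = 0 → p.1 = 0} := by
  rintro ⟨r, ζ⟩ hp
  rcases eq_or_ne ζ 0 with rfl | hζ
  · obtain rfl : r = 0 := hp rfl
    refine ContinuousAt.continuousWithinAt ?_
    show Tendsto _ (𝓝 ((0 : ℝ), (0 : ℂ))) (𝓝 (rescale 0 0))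
    rw [rescale_zero_right, tendsto_zero_iff_norm_tendsto_zero]
    have hr : Tendsto (fun p : ℝ × ℂ => |p.1|) (𝓝 (0, 0)) (𝓝 0) :=
      continuous_fst.abs.tendsto' _ _ (by simp)
    exact squeeze_zero (fun _ => norm_nonneg _) (fun _ => norm_rescale_le) hr
  · refine ContinuousAt.continuousWithinAt ?_
    unfold rescale
    fun_prop (disch := exact norm_ne_zero_iff.mpr hζ)

end Rescale

noncomputable section

variable {ι : Type*} {A B C : Set (ι → ℝ)}

def momentAngle (A : Set (ι → ℝ)) : Set (ι → ℂ) := {z | (fun i => ‖z i‖ ^ 2) ∈ A}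

namespace momentAngle

def orbit (z : momentAngle A) : A := ⟨fun i => ‖(z : ι → ℂ) i‖ ^ 2, z.2⟩

theorem continuous_orbit : Continuous (orbit (A := A)) :=
  (continuous_pi fun i =>
    ((continuous_apply i).comp continuous_subtype_val).norm.pow 2).subtype_mk _

theorem orbit_mul {t : ι → ℂ} (ht : ∀ i, ‖t i‖ = 1) {z w : momentAngle A}
    (hw : ∀ i, (w : ι → ℂ) i = t i * (z : ι → ℂ) i) : orbit w = orbit z := by
  ext i
  simp [orbit, hw, ht]

def lift (g : A → B) (z : momentAngle A) : ι → ℂ :=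
  fun i => rescale √((g (orbit z) : ι → ℝ) i) ((z : ι → ℂ) i)

def PreservesZeroCoords (g : A → B) : Prop :=
  ∀ (y : A) i, (y : ι → ℝ) i = 0 → (g y : ι → ℝ) i = 0

variable {g : A → B}

theorem norm_sq_lift (hB : ∀ y ∈ B, 0 ≤ y) (hg : PreservesZeroCoords g) (z : momentAngle A)
    (i : ι) :
    ‖lift g z i‖ ^ 2 = (g (orbit z) : ι → ℝ) i := by
  have hnonneg := hB _ (g (orbit z)).2 i
  rw [lift, norm_rescale (Real.sqrt_nonneg _), Real.sq_sqrt hnonneg]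
  intro hz
  rw [hg _ _ (by simp [orbit, hz]), Real.sqrt_zero]

theorem lift_mem (hB : ∀ y ∈ B, 0 ≤ y) (hg : PreservesZeroCoords g)
    (z : momentAngle A) : lift g z ∈ momentAngle B := by
  change (fun i => ‖lift g z i‖ ^ 2) ∈ B
  simp only [norm_sq_lift hB hg]
  exact (g (orbit z)).2

theorem orbit_lift (hB : ∀ y ∈ B, 0 ≤ y) (hg : PreservesZeroCoords g)
    (z : momentAngle A) : orbit ⟨lift g z, lift_mem hB hg z⟩ = g (orbit z) := by
  ext i
  exact norm_sq_lift hB hg z i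

theorem lift_lift {g' : B → C} (hB : ∀ y ∈ B, 0 ≤ y) (hg : PreservesZeroCoords g)
    (hg' : PreservesZeroCoords g') (z : momentAngle A) :
    lift g' ⟨lift g z, lift_mem hB hg z⟩ = lift (g' ∘ g) z := by
  ext i
  simp only [lift, orbit_lift hB hg]
  rw [rescale_rescale (Real.sqrt_nonneg _)]
  · rfl
  · intro h
    rw [Real.sqrt_eq_zero (hB _ (g (orbit z)).2 i)] at h
    rw [hg' _ _ h, Real.sqrt_zero]

theorem lift_id (z : momentAngle A) : lift id z = z := by
  ext i
  simp [lift, orbit, Real.sqrt_sq (norm_nonneg _), rescale_norm_self]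

theorem continuous_lift (hg_cont : Continuous g) (hg : PreservesZeroCoords g) :
    Continuous (lift g) := by
  refine continuous_pi fun i => continuousOn_rescale.comp_continuous
    (f := fun z : momentAngle A => (√((g (orbit z) : ι → ℝ) i), (z : ι → ℂ) i)) ?_ fun z hz => ?_
  · exact ((continuous_apply i).comp (continuous_subtype_val.comp
      (hg_cont.comp continuous_orbit))).sqrt.prodMk
      ((continuous_apply i).comp continuous_subtype_val)
  · change √((g (orbit z) : ι → ℝ) i) = 0
    rw [hg _ _ (by simp [orbit, show (z : ι → ℂ) i = 0 from hz]), Real.sqrt_zero]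

theorem lift_mul {t : ι → ℂ} (ht : ∀ i, ‖t i‖ = 1) {z w : momentAngle A}
    (hw : ∀ i, (w : ι → ℂ) i = t i * (z : ι → ℂ) i) (i : ι) :
    lift g w i = t i * lift g z i := by
  rw [lift, orbit_mul ht hw, hw, rescale_mul (ht i), lift]

end momentAngle

theorem exists_equivariant_homeomorph_momentAngle (h : A ≃ₜ B) (hA : ∀ y ∈ A, 0 ≤ y)
    (hB : ∀ y ∈ B, 0 ≤ y) (h₀ : ∀ (y : A) i, (h y : ι → ℝ) i = 0 ↔ (y : ι → ℝ) i = 0) :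
    ∃ e : momentAngle A ≃ₜ momentAngle B,
      ∀ t : ι → ℂ, (∀ i, ‖t i‖ = 1) →
        ∀ z w : momentAngle A, (∀ i, (w : ι → ℂ) i = t i * (z : ι → ℂ) i) →
          ∀ i, (e w : ι → ℂ) i = t i * (e z : ι → ℂ) i := by
  have hh : momentAngle.PreservesZeroCoords h := fun y i => (h₀ y i).mpr
  have hh' : momentAngle.PreservesZeroCoords h.symm := fun y i hy =>
    (h₀ (h.symm y) i).mp (by simpa using hy)
  refine ⟨{ toFun := fun z => ⟨momentAngle.lift h z, momentAngle.lift_mem hB hh z⟩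
            invFun := fun w => ⟨momentAngle.lift h.symm w, momentAngle.lift_mem hA hh' w⟩
            left_inv := fun z => Subtype.ext ?_
            right_inv := fun w => Subtype.ext ?_
            continuous_toFun := (momentAngle.continuous_lift h.continuous hh).subtype_mk _
            continuous_invFun := (momentAngle.continuous_lift h.symm.continuous hh').subtype_mk _ },
    fun t ht z w hw i => momentAngle.lift_mul ht hw i⟩
  · simp only [momentAngle.lift_lift hB hh hh', h.symm_comp_self, momentAngle.lift_id]
  · simp only [momentAngle.lift_lift hA hh' hh, h.self_comp_symm, momentAngle.lift_id]

end

structure GenericPresentation (ι : Type*) (n : ℕ) where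
  a : ι → Fin n → ℝ
  b : ι → ℝ
  isBounded : Bornology.IsBounded {x | ∀ i, 0 ≤ a i ⬝ᵥ x + b i}
  nonempty : {x | ∀ i, 0 ≤ a i ⬝ᵥ x + b i}.Nonempty
  linearIndependent : ∀ x, (∀ i, 0 ≤ a i ⬝ᵥ x + b i) →
    LinearIndependent ℝ fun i : {i // a i ⬝ᵥ x + b i = 0} => a i

namespace GenericPresentation

noncomputable section

open scoped Classical

variable {ι : Type*} {n : ℕ} (Q Q' : GenericPresentation ι n)

def slack (i : ι) (x : Fin n → ℝ) : ℝ := Q.a i ⬝ᵥ x + Q.b i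

def slackMap (x : Fin n → ℝ) : ι → ℝ := fun i => Q.slack i x

def polytope : Set (Fin n → ℝ) := {x | ∀ i, 0 ≤ Q.slack i x}

def face (I : Finset ι) : Set (Fin n → ℝ) := {x ∈ Q.polytope | ∀ i ∈ I, Q.slack i x = 0}

variable {Q Q'} {i j : ι} {I J : Finset ι} {x y v : Fin n → ℝ} {t : ℝ} {k : ℕ}

theorem polytope_nonempty : Q.polytope.Nonempty := Q.nonempty

theorem slack_add_smul : Q.slack i (x + t • v) = Q.slack i x + t * (Q.a i ⬝ᵥ v) := by
  simp only [slack, dotProduct_add, dotProduct_smul, smul_eq_mul]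
  ring

theorem slack_add_smul_sub :
    Q.slack i (x + t • (y - x)) = Q.slack i x + t * (Q.slack i y - Q.slack i x) := by
  rw [slack_add_smul, slack, slack, dotProduct_sub]
  ring

theorem continuous_slack (i : ι) : Continuous (Q.slack i) := by
  unfold slack dotProduct
  fun_prop

theorem isClosed_face (I : Finset ι) : IsClosed (Q.face I) := by
  have : Q.face I = (⋂ i, {x | 0 ≤ Q.slack i x}) ∩ ⋂ i ∈ I, {x | Q.slack i x = 0} := by
    ext
    simp [face, polytope]
  rw [this]
  exact (isClosed_iInter fun i => isClosed_le continuous_const (Q.continuous_slack i)).inter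
    (isClosed_biInter fun i _ => isClosed_eq (Q.continuous_slack i) continuous_const)

theorem injective_mulVecLin : Function.Injective (Matrix.of Q.a).mulVecLin := by
  refine (injective_iff_map_eq_zero _).mpr fun v hv => ?_
  obtain ⟨x, hx⟩ := Q.nonempty
  refine eq_zero_of_forall_add_smul_mem (x := x) Q.isBounded fun t _ i => ?_
  have hvi : Q.a i ⬝ᵥ v = 0 := congr_fun hv i
  simpa [dotProduct_add, dotProduct_smul, hvi] using hx i

theorem isEmbedding_slackMap : IsEmbedding Q.slackMap :=
  ((Homeomorph.addRight Q.b).isEmbedding.comp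
    (LinearMap.isClosedEmbedding_of_injective
      (LinearMap.ker_eq_bot.mpr Q.injective_mulVecLin)).isEmbedding :)

variable (Q) in
theorem face_nonempty_iff (I : Finset ι) : (Q.face I).Nonempty ↔
    (I : Set ι) = ∅ ∨ (⋂ i ∈ (I : Set ι), {x ∈ Q.polytope | Q.slack i x = 0}).Nonempty := by
  rcases I.eq_empty_or_nonempty with rfl | ⟨i₀, hi₀⟩
  · simpa [face] using Q.polytope_nonempty
  have hface : ⋂ i ∈ (I : Set ι), {x ∈ Q.polytope | Q.slack i x = 0} = Q.face I := by
    ext x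
    simp only [mem_iInter, mem_sep_iff, Finset.mem_coe, face]
    exact ⟨fun h => ⟨(h i₀ hi₀).1, fun i hi => (h i hi).2⟩, fun h i hi => ⟨h.1, h.2 i hi⟩⟩
  rw [hface]
  simp [Finset.nonempty_iff_ne_empty.mp ⟨i₀, hi₀⟩]

theorem nonneg_of_mem_slackMap_image {y : ι → ℝ} (hy : y ∈ Q.slackMap '' Q.polytope) : 0 ≤ y := by
  obtain ⟨x, hx, rfl⟩ := hy
  exact hx

variable (Q) in
theorem mem_momentAngle_slackMap_image {z : ι → ℂ} :
    z ∈ momentAngle (Q.slackMap '' Q.polytope) ↔ ∃ x ∈ Q.polytope, ∀ i, ‖z i‖ ^ 2 = Q.slack i x :=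
  exists_congr fun _ => and_congr Iff.rfl
    ⟨fun h i => (congr_fun h i).symm, fun h => funext fun i => (h i).symm⟩

variable (Q) [Fintype ι]

def activeSet (x : Fin n → ℝ) : Finset ι := {i | Q.slack i x = 0}

/-- The relative interior of `Q.face I`. -/
def openFace (I : Finset ι) : Set (Fin n → ℝ) := {x ∈ Q.polytope | Q.activeSet x = I}

/-- The union of the faces of codimension at least `k`. -/
def skeleton (k : ℕ) : Set (Fin n → ℝ) := {x ∈ Q.polytope | k ≤ #(Q.activeSet x)}

def center (I : Finset ι) : Fin n → ℝ := Classical.epsilon (· ∈ Q.openFace I)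

variable {Q}

theorem mem_activeSet : i ∈ Q.activeSet x ↔ Q.slack i x = 0 := by
  simp [activeSet]

theorem mem_face_iff_subset_activeSet : x ∈ Q.face I ↔ x ∈ Q.polytope ∧ I ⊆ Q.activeSet x := by
  simp [face, Finset.subset_iff, mem_activeSet]

theorem openFace_subset_face : Q.openFace I ⊆ Q.face I := fun _ hx =>
  mem_face_iff_subset_activeSet.mpr ⟨hx.1, hx.2.ge⟩

theorem slack_pos_of_mem_openFace (hx : x ∈ Q.openFace I) (hj : j ∉ I) : 0 < Q.slack j x :=
  (hx.1 j).lt_of_ne' fun h => hj (hx.2 ▸ mem_activeSet.mpr h)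

theorem mem_skeleton_iff_of_mem_openFace (hx : x ∈ Q.openFace I) :
    x ∈ Q.skeleton k ↔ k ≤ #I := by
  simp [skeleton, hx.1, hx.2]

theorem skeleton_eq_empty (hk : Fintype.card ι < k) : Q.skeleton k = ∅ :=
  eq_empty_of_forall_notMem fun _ hx => (hx.2.trans (Finset.card_le_univ _)).not_gt hk

theorem skeleton_zero : Q.skeleton 0 = Q.polytope := by
  simp [skeleton]

theorem skeleton_eq_iUnion_face (k : ℕ) :
    Q.skeleton k = ⋃ I : {I : Finset ι // #I = k}, Q.face I := by
  ext x
  simp only [mem_iUnion, mem_face_iff_subset_activeSet, Subtype.exists, exists_prop]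
  constructor
  · rintro ⟨hx, hk⟩
    obtain ⟨I, hI, rfl⟩ := Finset.exists_subset_card_eq hk
    exact ⟨I, rfl, hx, hI⟩
  · rintro ⟨I, rfl, hx, hI⟩
    exact ⟨hx, Finset.card_le_card hI⟩

/-- By genericity there is a direction along which the constraints of `I` stay tight while the
other constraints active at a given point of the face become slack. -/
theorem openFace_nonempty_iff : (Q.openFace I).Nonempty ↔ (Q.face I).Nonempty := by
  refine ⟨fun h => h.mono openFace_subset_face, fun ⟨x, hx⟩ => ?_⟩
  obtain ⟨hxP, hIx⟩ := mem_face_iff_subset_activeSet.mp hx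
  obtain ⟨v, hv⟩ := Matrix.mulVec_surjective_of_linearIndependent_row
    (M := Matrix.of fun j : {j // Q.a j ⬝ᵥ x + Q.b j = 0} => Q.a j) (Q.linearIndependent x hxP)
    fun j => if (j : ι) ∈ I then 0 else 1
  have hv' (j : ι) (hj : Q.slack j x = 0) : Q.a j ⬝ᵥ v = if j ∈ I then 0 else 1 :=
    congr_fun hv ⟨j, hj⟩
  have hev : ∀ᶠ t in 𝓝 (0 : ℝ), ∀ j, Q.slack j x ≠ 0 → 0 < Q.slack j (x + t • v) := by
    refine eventually_all.mpr fun j => ?_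
    by_cases hj : Q.slack j x = 0
    · exact Eventually.of_forall fun _ h => absurd hj h
    · have hcont : Tendsto (fun t : ℝ => Q.slack j x + t * (Q.a j ⬝ᵥ v)) (𝓝 0)
          (𝓝 (Q.slack j x)) :=
        (by fun_prop : Continuous fun t : ℝ => Q.slack j x + t * (Q.a j ⬝ᵥ v)).tendsto' 0 _
          (by simp)
      filter_upwards [hcont.eventually_const_lt ((hxP j).lt_of_ne' hj)] with t ht _
      rwa [slack_add_smul]
  obtain ⟨t, hpos, ht⟩ := ((hev.filter_mono nhdsWithin_le_nhds).and self_mem_nhdsWithin).exists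
    (f := 𝓝[>] (0 : ℝ))
  refine ⟨x + t • v, fun j => ?_, Finset.ext fun j => ?_⟩
  · by_cases hj : Q.slack j x = 0
    · rw [slack_add_smul, hj, hv' j hj]
      split_ifs <;> simp [le_of_lt ht]
    · exact (hpos j hj).le
  · rw [mem_activeSet]
    by_cases hj : Q.slack j x = 0
    · rw [slack_add_smul, hj, hv' j hj]
      split_ifs with hjI <;> simp [hjI, ht.ne']
    · exact iff_of_false (hpos j hj).ne' fun hjI => hj (mem_activeSet.mp (hIx hjI))

theorem center_mem_openFace (hI : (Q.openFace I).Nonempty) : Q.center I ∈ Q.openFace I :=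
  Classical.epsilon_spec hI

theorem mem_face_of_mem_openFace (hx : x ∈ Q.openFace J) (hIJ : I ⊆ J) : x ∈ Q.face I :=
  mem_face_iff_subset_activeSet.mpr ⟨hx.1, hx.2 ▸ hIJ⟩

theorem add_smul_sub_mem_openFace (hc : x ∈ Q.openFace I) (hy : y ∈ Q.face I) (ht₀ : 0 ≤ t)
    (ht₁ : t < 1) : x + t • (y - x) ∈ Q.openFace I := by
  have hslack (j : ι) : Q.slack j (x + t • (y - x)) = (1 - t) * Q.slack j x + t * Q.slack j y := by
    rw [slack_add_smul_sub]
    ring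
  have hpos (j : ι) (hj : j ∉ I) : 0 < Q.slack j (x + t • (y - x)) := by
    rw [hslack]
    have := slack_pos_of_mem_openFace hc hj
    have := hy.1 j
    nlinarith
  have hzero (i : ι) (hi : i ∈ I) : Q.slack i (x + t • (y - x)) = 0 := by
    rw [hslack, hy.2 i hi, mem_activeSet.mp (hc.2.ge hi)]
    ring
  refine ⟨fun j => ?_, Finset.ext fun j => ?_⟩
  · by_cases hj : j ∈ I
    · exact (hzero j hj).ge
    · exact (hpos j hj).le
  · rw [mem_activeSet]
    exact ⟨fun h => by_contra fun hj => (hpos j hj).ne' h, hzero j⟩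

variable (Q) in
/-- The Minkowski gauge of `Q.face I` centred at `c = Q.center I`: within the face only the
inequalities `0 ≤ slack j` with `j ∉ I` remain, and along the ray from `c` through `x` the `j`-th
one becomes tight at parameter `1 / (1 - slack j x / slack j c)`. -/
def gauge (I : Finset ι) (x : Fin n → ℝ) : ℝ :=
  Iᶜ.fold max 0 fun j => 1 - Q.slack j x / Q.slack j (Q.center I)

variable (Q) in
def radialProj (I : Finset ι) (x : Fin n → ℝ) : Fin n → ℝ :=
  Q.center I + (Q.gauge I x)⁻¹ • (x - Q.center I)

variable (Q Q') in
/-- Extension of a map `Φ`, given on the relative boundary of `Q.face I`, to the whole face by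
coning from `Q.center I` to `Q'.center I`. -/
def coneExtend (I : Finset ι) (Φ : (Fin n → ℝ) → Fin n → ℝ) (x : Fin n → ℝ) : Fin n → ℝ :=
  Q'.center I + Q.gauge I x • (Φ (Q.radialProj I x) - Q'.center I)

variable {Φ Ψ : (Fin n → ℝ) → Fin n → ℝ}

theorem gauge_nonneg (x : Fin n → ℝ) : 0 ≤ Q.gauge I x :=
  (Finset.le_fold_max _).mpr (Or.inl le_rfl)

theorem one_sub_div_le_gauge (hj : j ∉ I) :
    1 - Q.slack j x / Q.slack j (Q.center I) ≤ Q.gauge I x :=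
  (Finset.le_fold_max _).mpr (Or.inr ⟨j, Finset.mem_compl.mpr hj, le_rfl⟩)

theorem continuous_gauge : Continuous (Q.gauge I) :=
  Continuous.finset_fold_max fun j =>
    continuous_const.sub ((Q.continuous_slack j).div_const _)

theorem gauge_center (hI : (Q.openFace I).Nonempty) : Q.gauge I (Q.center I) = 0 := by
  refine le_antisymm ((Finset.fold_max_le _).mpr ⟨le_rfl, fun j hj => ?_⟩) (gauge_nonneg _)
  rw [div_self (slack_pos_of_mem_openFace (center_mem_openFace hI)
    (Finset.mem_compl.mp hj)).ne', sub_self]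

theorem gauge_le_one (hI : (Q.openFace I).Nonempty) (hx : x ∈ Q.polytope) : Q.gauge I x ≤ 1 :=
  (Finset.fold_max_le _).mpr ⟨zero_le_one, fun j hj => sub_le_self _ <| div_nonneg (hx j)
    (slack_pos_of_mem_openFace (center_mem_openFace hI) (Finset.mem_compl.mp hj)).le⟩

theorem gauge_lt_one (hI : (Q.openFace I).Nonempty) (hx : x ∈ Q.openFace I) : Q.gauge I x < 1 :=
  (Finset.fold_max_lt _).mpr ⟨zero_lt_one, fun _ hj => sub_lt_self _ <| div_pos
    (slack_pos_of_mem_openFace hx (Finset.mem_compl.mp hj))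
    (slack_pos_of_mem_openFace (center_mem_openFace hI) (Finset.mem_compl.mp hj))⟩

theorem gauge_eq_one (hI : (Q.openFace I).Nonempty) (hx : x ∈ Q.polytope)
    (hIx : I ⊂ Q.activeSet x) : Q.gauge I x = 1 := by
  obtain ⟨j, hjx, hj⟩ := Finset.exists_of_ssubset hIx
  refine le_antisymm (gauge_le_one hI hx) ?_
  simpa [mem_activeSet.mp hjx] using one_sub_div_le_gauge (Q := Q) (x := x) hj

/-- A point of the face other than the center has positive gauge: otherwise the whole ray from the
center through it would stay in the bounded polytope. -/
theorem gauge_pos (hI : (Q.openFace I).Nonempty) (hx : x ∈ Q.face I) (hxc : x ≠ Q.center I) :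
    0 < Q.gauge I x := by
  have hc := center_mem_openFace hI
  by_contra! hle
  refine hxc <| sub_eq_zero.mp <|
    eq_zero_of_forall_add_smul_mem (x := Q.center I) Q.isBounded fun t ht j => ?_
  change 0 ≤ Q.slack j _
  rw [slack_add_smul_sub]
  by_cases hj : j ∈ I
  · rw [hx.2 j hj, mem_activeSet.mp (hc.2.ge hj)]
    simp
  · have hcj := slack_pos_of_mem_openFace hc hj
    have h := (one_sub_div_le_gauge (Q := Q) (x := x) hj).trans hle
    rw [sub_nonpos, one_le_div hcj] at h
    nlinarith

theorem gauge_add_smul_sub (hI : (Q.openFace I).Nonempty) (y : Fin n → ℝ) (ht : 0 ≤ t) :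
    Q.gauge I (Q.center I + t • (y - Q.center I)) = t * Q.gauge I y := by
  rw [gauge, gauge, ← Finset.fold_max_zero_mul _ _ ht]
  refine Finset.fold_congr fun j hj => ?_
  have := (slack_pos_of_mem_openFace (center_mem_openFace hI) (Finset.mem_compl.mp hj)).ne'
  rw [slack_add_smul_sub]
  field_simp
  ring

theorem slack_radialProj_of_notMem (hI : (Q.openFace I).Nonempty) (hj : j ∉ I)
    (hx : Q.gauge I x ≠ 0) :
    Q.slack j (Q.radialProj I x) = Q.slack j (Q.center I) / Q.gauge I x *
      (Q.gauge I x - (1 - Q.slack j x / Q.slack j (Q.center I))) := by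
  have := (slack_pos_of_mem_openFace (center_mem_openFace hI) hj).ne'
  rw [radialProj, slack_add_smul_sub]
  field_simp
  ring

theorem slack_radialProj_of_mem (hI : (Q.openFace I).Nonempty) (hx : x ∈ Q.face I) (hi : i ∈ I) :
    Q.slack i (Q.radialProj I x) = 0 := by
  rw [radialProj, slack_add_smul_sub, hx.2 i hi,
    mem_activeSet.mp ((center_mem_openFace hI).2.ge hi)]
  simp

theorem radialProj_mem_polytope (hI : (Q.openFace I).Nonempty) (hx : x ∈ Q.face I)
    (hxc : x ≠ Q.center I) : Q.radialProj I x ∈ Q.polytope := by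
  intro j
  by_cases hj : j ∈ I
  · exact (slack_radialProj_of_mem hI hx hj).ge
  · rw [slack_radialProj_of_notMem hI hj (gauge_pos hI hx hxc).ne']
    exact mul_nonneg (div_nonneg (slack_pos_of_mem_openFace (center_mem_openFace hI) hj).le
      (gauge_nonneg x)) (sub_nonneg.mpr (one_sub_div_le_gauge hj))

theorem ssubset_activeSet_radialProj (hI : (Q.openFace I).Nonempty) (hx : x ∈ Q.face I)
    (hxc : x ≠ Q.center I) : I ⊂ Q.activeSet (Q.radialProj I x) := by
  have hpos := gauge_pos hI hx hxc
  obtain ⟨j, hj, hjx⟩ := Finset.exists_mem_eq_fold_max_of_lt hpos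
  refine Finset.ssubset_iff_of_subset (fun i hi => mem_activeSet.mpr
    (slack_radialProj_of_mem hI hx hi)) |>.mpr ⟨j, mem_activeSet.mpr ?_, Finset.mem_compl.mp hj⟩
  rw [slack_radialProj_of_notMem hI (Finset.mem_compl.mp hj) hpos.ne']
  simp [gauge, hjx]

theorem radialProj_mem_skeleton (hI : (Q.openFace I).Nonempty) (hx : x ∈ Q.face I)
    (hxc : x ≠ Q.center I) : Q.radialProj I x ∈ Q.skeleton (#I + 1) :=
  ⟨radialProj_mem_polytope hI hx hxc, Finset.card_lt_card (ssubset_activeSet_radialProj hI hx hxc)⟩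

theorem add_gauge_smul_radialProj_sub (hx : Q.gauge I x ≠ 0) :
    Q.center I + Q.gauge I x • (Q.radialProj I x - Q.center I) = x := by
  rw [radialProj, add_sub_cancel_left, smul_smul, mul_inv_cancel₀ hx, one_smul, add_sub_cancel]

theorem radialProj_add_smul_sub (hI : (Q.openFace I).Nonempty) (hy : y ∈ Q.polytope)
    (hIy : I ⊂ Q.activeSet y) (ht : 0 < t) :
    Q.radialProj I (Q.center I + t • (y - Q.center I)) = y := by
  rw [radialProj, gauge_add_smul_sub hI y ht.le, gauge_eq_one hI hy hIy, mul_one,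
    add_sub_cancel_left, smul_smul, inv_mul_cancel₀ ht.ne', one_smul, add_sub_cancel]

theorem coneExtend_center (hI : (Q.openFace I).Nonempty) :
    Q.coneExtend Q' I Φ (Q.center I) = Q'.center I := by
  rw [coneExtend, gauge_center hI, zero_smul, add_zero]

theorem coneExtend_of_ssubset (hI : (Q.openFace I).Nonempty) (hx : x ∈ Q.polytope)
    (hIx : I ⊂ Q.activeSet x) : Q.coneExtend Q' I Φ x = Φ x := by
  rw [coneExtend, radialProj, gauge_eq_one hI hx hIx, inv_one, one_smul, one_smul,
    add_sub_cancel, add_sub_cancel]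

theorem coneExtend_add_smul_sub (hI : (Q.openFace I).Nonempty) (hy : y ∈ Q.polytope)
    (hIy : I ⊂ Q.activeSet y) (ht : 0 < t) :
    Q.coneExtend Q' I Φ (Q.center I + t • (y - Q.center I)) =
      Q'.center I + t • (Φ y - Q'.center I) := by
  rw [coneExtend, radialProj_add_smul_sub hI hy hIy ht, gauge_add_smul_sub hI y ht.le,
    gauge_eq_one hI hy hIy, mul_one]

variable (Q Q') in
structure SkeletonMatching (k : ℕ) (Φ Ψ : (Fin n → ℝ) → Fin n → ℝ) : Prop where
  mem_openFace : ∀ x ∈ Q.skeleton k, Φ x ∈ Q'.openFace (Q.activeSet x)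
  leftInvOn : LeftInvOn Ψ Φ (Q.skeleton k)
  continuousOn : ContinuousOn Φ (Q.skeleton k)

theorem SkeletonMatching.mapsTo (h : SkeletonMatching Q Q' k Φ Ψ) :
    MapsTo Φ (Q.skeleton k) (Q'.skeleton k) :=
  fun x hx => (mem_skeleton_iff_of_mem_openFace (h.mem_openFace x hx)).mpr hx.2

theorem coneExtend_mem_openFace (hI : (Q.openFace I).Nonempty) (hI' : (Q'.openFace I).Nonempty)
    (hΦ : ∀ y ∈ Q.skeleton (#I + 1), Φ y ∈ Q'.openFace (Q.activeSet y))
    (hx : x ∈ Q.openFace I) : Q.coneExtend Q' I Φ x ∈ Q'.openFace I := by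
  rcases eq_or_ne x (Q.center I) with rfl | hxc
  · rw [coneExtend_center hI]
    exact center_mem_openFace hI'
  have hx' := openFace_subset_face hx
  exact add_smul_sub_mem_openFace (center_mem_openFace hI')
    (mem_face_of_mem_openFace (hΦ _ (radialProj_mem_skeleton hI hx' hxc))
      (ssubset_activeSet_radialProj hI hx' hxc).subset)
    (gauge_nonneg x) (gauge_lt_one hI hx)

theorem coneExtend_coneExtend (hI : (Q.openFace I).Nonempty) (hI' : (Q'.openFace I).Nonempty)
    (hΦ : SkeletonMatching Q Q' (#I + 1) Φ Ψ) (hx : x ∈ Q.openFace I) :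
    Q'.coneExtend Q I Ψ (Q.coneExtend Q' I Φ x) = x := by
  rcases eq_or_ne x (Q.center I) with rfl | hxc
  · rw [coneExtend_center hI, coneExtend_center hI']
  have hx' := openFace_subset_face hx
  have hy := radialProj_mem_skeleton hI hx' hxc
  have hρ := gauge_pos hI hx' hxc
  obtain ⟨hy'P, hy'J⟩ := hΦ.mem_openFace _ hy
  calc Q'.coneExtend Q I Ψ (Q.coneExtend Q' I Φ x)
      = Q.center I + Q.gauge I x • (Ψ (Φ (Q.radialProj I x)) - Q.center I) :=
        coneExtend_add_smul_sub hI' hy'P (hy'J ▸ ssubset_activeSet_radialProj hI hx' hxc) hρ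
    _ = x := by rw [hΦ.leftInvOn hy, add_gauge_smul_radialProj_sub hρ.ne']

theorem continuousOn_coneExtend (hI : (Q.openFace I).Nonempty)
    (hΦP : MapsTo Φ (Q.skeleton (#I + 1)) Q'.polytope)
    (hΦ : ContinuousOn Φ (Q.skeleton (#I + 1))) :
    ContinuousOn (Q.coneExtend Q' I Φ) (Q.face I) := by
  intro x hx
  rw [← continuousWithinAt_sdiff_singleton (y := Q.center I)]
  have hπ : MapsTo (Q.radialProj I) (Q.face I \ {Q.center I}) (Q.skeleton (#I + 1)) :=
    fun y hy => radialProj_mem_skeleton hI hy.1 hy.2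
  rcases eq_or_ne x (Q.center I) with rfl | hxc
  · -- the gauge tends to zero while `Φ ∘ radialProj` stays in the bounded polytope
    obtain ⟨R, hR⟩ := isBounded_iff_forall_norm_le.mp Q'.isBounded
    have hρ : Tendsto (Q.gauge I) (𝓝[Q.face I \ {Q.center I}] Q.center I) (𝓝 0) := by
      have := (continuous_gauge (Q := Q) (I := I)).continuousWithinAt
        (s := Q.face I \ {Q.center I}) (x := Q.center I)
      rwa [ContinuousWithinAt, gauge_center hI] at this
    have hbdd : IsBoundedUnder (· ≤ ·) (𝓝[Q.face I \ {Q.center I}] Q.center I)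
        (norm ∘ fun y => Φ (Q.radialProj I y) - Q'.center I) :=
      ⟨R + ‖Q'.center I‖, eventually_map.mpr <| eventually_nhdsWithin_of_forall fun y hy =>
        (norm_sub_le _ _).trans (by gcongr; exact hR _ (hΦP (hπ hy)))⟩
    have := (hρ.zero_smul_isBoundedUnder_le hbdd).const_add (Q'.center I)
    rw [add_zero] at this
    rwa [ContinuousWithinAt, coneExtend_center hI]
  · have hρ := gauge_pos hI hx hxc
    have hπx : ContinuousWithinAt (Q.radialProj I) (Q.face I \ {Q.center I}) x :=
      (continuousAt_const.add ((continuous_gauge.continuousAt.inv₀ hρ.ne').smul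
        (continuousAt_id.sub continuousAt_const))).continuousWithinAt
    exact continuousWithinAt_const.add (continuous_gauge.continuousWithinAt.smul
      (((hΦ _ (hπ ⟨hx, hxc⟩)).comp hπx hπ).sub continuousWithinAt_const))

variable (Q Q') in
def extendStep (k : ℕ) (Φ : (Fin n → ℝ) → Fin n → ℝ) (x : Fin n → ℝ) : Fin n → ℝ :=
  if x ∈ Q.skeleton (k + 1) then Φ x else Q.coneExtend Q' (Q.activeSet x) Φ x

theorem extendStep_of_mem (hx : x ∈ Q.skeleton (k + 1)) : extendStep Q Q' k Φ x = Φ x :=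
  if_pos hx

theorem extendStep_of_notMem (hx : x ∉ Q.skeleton (k + 1)) :
    extendStep Q Q' k Φ x = Q.coneExtend Q' (Q.activeSet x) Φ x :=
  if_neg hx

theorem extendStep_eq_coneExtend (hIk : #I = k) (hx : x ∈ Q.face I) :
    extendStep Q Q' k Φ x = Q.coneExtend Q' I Φ x := by
  have hI := openFace_nonempty_iff.mpr ⟨x, hx⟩
  obtain ⟨hxP, hIx⟩ := mem_face_iff_subset_activeSet.mp hx
  by_cases hxk : x ∈ Q.skeleton (k + 1)
  · rw [extendStep_of_mem hxk, coneExtend_of_ssubset hI hxP]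
    exact hIx.ssubset_of_ne (by rintro rfl; have := hxk.2; omega)
  · have hcard : #(Q.activeSet x) < k + 1 := not_le.mp fun h => hxk ⟨hxP, h⟩
    have hJ : Q.activeSet x = I := (Finset.eq_of_subset_of_card_le hIx (by omega)).symm
    rw [extendStep_of_notMem hxk, hJ]

theorem card_activeSet_eq (hx : x ∈ Q.skeleton k) (hxk : x ∉ Q.skeleton (k + 1)) :
    #(Q.activeSet x) = k :=
  le_antisymm (Nat.lt_succ_iff.mp (not_le.mp fun h => hxk ⟨hx.1, h⟩)) hx.2

theorem extendStep_mem_openFace (hK : ∀ I, (Q.openFace I).Nonempty ↔ (Q'.openFace I).Nonempty)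
    (hΦ : ∀ y ∈ Q.skeleton (k + 1), Φ y ∈ Q'.openFace (Q.activeSet y)) (hx : x ∈ Q.skeleton k) :
    extendStep Q Q' k Φ x ∈ Q'.openFace (Q.activeSet x) := by
  by_cases hxk : x ∈ Q.skeleton (k + 1)
  · rw [extendStep_of_mem hxk]
    exact hΦ x hxk
  · have hx' : x ∈ Q.openFace (Q.activeSet x) := ⟨hx.1, rfl⟩
    have hI : (Q.openFace (Q.activeSet x)).Nonempty := ⟨x, hx'⟩
    rw [extendStep_of_notMem hxk]
    have hcard := card_activeSet_eq hx hxk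
    subst hcard
    exact coneExtend_mem_openFace hI ((hK _).mp hI) hΦ hx'

theorem extendStep_leftInvOn (hK : ∀ I, (Q.openFace I).Nonempty ↔ (Q'.openFace I).Nonempty)
    (h : SkeletonMatching Q Q' (k + 1) Φ Ψ) :
    LeftInvOn (extendStep Q' Q k Ψ) (extendStep Q Q' k Φ) (Q.skeleton k) := by
  intro x hx
  by_cases hxk : x ∈ Q.skeleton (k + 1)
  · rw [extendStep_of_mem hxk, extendStep_of_mem (h.mapsTo hxk), h.leftInvOn hxk]
  · have hcard := card_activeSet_eq hx hxk
    have hx' : x ∈ Q.openFace (Q.activeSet x) := ⟨hx.1, rfl⟩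
    have hI : (Q.openFace (Q.activeSet x)).Nonempty := ⟨x, hx'⟩
    have hmem := extendStep_mem_openFace hK h.mem_openFace hx
    rw [extendStep_eq_coneExtend hcard (openFace_subset_face hmem), extendStep_of_notMem hxk]
    subst hcard
    exact coneExtend_coneExtend hI ((hK _).mp hI) h hx'

theorem SkeletonMatching.extendStep
    (hK : ∀ I, (Q.openFace I).Nonempty ↔ (Q'.openFace I).Nonempty)
    (h : SkeletonMatching Q Q' (k + 1) Φ Ψ) :
    SkeletonMatching Q Q' k (extendStep Q Q' k Φ) (extendStep Q' Q k Ψ) where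
  mem_openFace _ hx := extendStep_mem_openFace hK h.mem_openFace hx
  leftInvOn := extendStep_leftInvOn hK h
  continuousOn := by
    rw [skeleton_eq_iUnion_face]
    refine (locallyFinite_of_finite _).continuousOn_iUnion (fun I => isClosed_face _)
      fun ⟨I, hIk⟩ => ?_
    rcases (Q.face I).eq_empty_or_nonempty with hI | hI
    · simp [hI]
    subst hIk
    exact (continuousOn_coneExtend (openFace_nonempty_iff.mpr hI)
      (fun y hy => (h.mapsTo hy).1) h.continuousOn).congr
      fun y hy => extendStep_eq_coneExtend rfl hy

theorem exists_skeletonMatching (hK : ∀ I, (Q.openFace I).Nonempty ↔ (Q'.openFace I).Nonempty)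
    (k : ℕ) : ∃ Φ Ψ, SkeletonMatching Q Q' k Φ Ψ ∧ SkeletonMatching Q' Q k Ψ Φ := by
  obtain ⟨N, hN, hkN⟩ : ∃ N, Fintype.card ι < N ∧ k ≤ N :=
    ⟨k + Fintype.card ι + 1, by omega, by omega⟩
  induction hkN using Nat.decreasingInduction with
  | self =>
    have h := Q.skeleton_eq_empty hN
    have h' := Q'.skeleton_eq_empty hN
    exact ⟨id, id, ⟨by simp [h], by simp [h, LeftInvOn], by simp [h]⟩,
      ⟨by simp [h'], by simp [h', LeftInvOn], by simp [h']⟩⟩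
  | of_succ k _ ih =>
    obtain ⟨Φ, Ψ, h, h'⟩ := ih
    exact ⟨_, _, h.extendStep hK, h'.extendStep (fun I => (hK I).symm)⟩

theorem exists_homeomorph_polytope (hK : ∀ I, (Q.face I).Nonempty ↔ (Q'.face I).Nonempty) :
    ∃ Φ : Q.polytope ≃ₜ Q'.polytope, ∀ x, Q'.activeSet (Φ x) = Q.activeSet x := by
  obtain ⟨Φ, Ψ, h, h'⟩ := exists_skeletonMatching (Q := Q) (Q' := Q')
    (fun I => by rw [openFace_nonempty_iff, openFace_nonempty_iff, hK]) 0
  rw [← Q.skeleton_zero, ← Q'.skeleton_zero]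
  refine ⟨{ toFun := h.mapsTo.restrict Φ _ _
            invFun := h'.mapsTo.restrict Ψ _ _
            left_inv := fun x => Subtype.ext (h.leftInvOn x.2)
            right_inv := fun y => Subtype.ext (h'.leftInvOn y.2)
            continuous_toFun := h.continuousOn.mapsToRestrict h.mapsTo
            continuous_invFun := h'.continuousOn.mapsToRestrict h'.mapsTo },
    fun x => (h.mem_openFace x x.2).2⟩

theorem exists_homeomorph_slackMap_image (hK : ∀ I, (Q.face I).Nonempty ↔ (Q'.face I).Nonempty) :
    ∃ h : Q.slackMap '' Q.polytope ≃ₜ Q'.slackMap '' Q'.polytope,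
      ∀ y i, (h y : ι → ℝ) i = 0 ↔ (y : ι → ℝ) i = 0 := by
  obtain ⟨Φ, hΦ⟩ := exists_homeomorph_polytope hK
  let e := Q.isEmbedding_slackMap.homeomorphImage Q.polytope
  let e' := Q'.isEmbedding_slackMap.homeomorphImage Q'.polytope
  refine ⟨e.symm.trans (Φ.trans e'), fun y i => ?_⟩
  obtain ⟨x, rfl⟩ := e.surjective y
  simp only [Homeomorph.trans_apply, Homeomorph.symm_apply_apply]
  change Q'.slack i (Φ x) = 0 ↔ Q.slack i x = 0
  rw [← mem_activeSet, ← mem_activeSet, hΦ]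

end

end GenericPresentation

theorem ZP_equivariant_homeomorphism_of_combinatorial_equivalence_general
    (n m : ℕ)
    (a : Fin m → (Fin n → ℝ)) (b : Fin m → ℝ)
    (a' : Fin m → (Fin n → ℝ)) (b' : Fin m → ℝ)
    (P P' : Set (Fin n → ℝ))
    (hP : P = {x | ∀ i, 0 ≤ ∑ j, a i j * x j + b i})
    (hP' : P' = {x | ∀ i, 0 ≤ ∑ j, a' i j * x j + b' i})
    (hPbdd : Bornology.IsBounded P) (hP'bdd : Bornology.IsBounded P')
    (hPint : (interior P).Nonempty) (hP'int : (interior P').Nonempty)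
    (hgeneric : ∀ x ∈ P, LinearIndependent ℝ
      (fun i : {i : Fin m // ∑ j, a i j * x j + b i = 0} => a i.1))
    (hgeneric' : ∀ x ∈ P', LinearIndependent ℝ
      (fun i : {i : Fin m // ∑ j, a' i j * x j + b' i = 0} => a' i.1))
    (F F' : Fin m → Set (Fin n → ℝ))
    (hF : ∀ i, F i = {x ∈ P | ∑ j, a i j * x j + b i = 0})
    (hF' : ∀ i, F' i = {x ∈ P' | ∑ j, a' i j * x j + b' i = 0})
    (hKK : {I : Set (Fin m) | I = ∅ ∨ (⋂ i ∈ I, F i).Nonempty} =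
           {I : Set (Fin m) | I = ∅ ∨ (⋂ i ∈ I, F' i).Nonempty})
    (ZP ZP' : Set (Fin m → ℂ))
    (hZP : ZP = {z | ∃ x ∈ P, ∀ i, ‖z i‖ ^ 2 = ∑ j, a i j * x j + b i})
    (hZP' : ZP' = {z | ∃ x ∈ P', ∀ i, ‖z i‖ ^ 2 = ∑ j, a' i j * x j + b' i}) :
    ∃ e : ZP ≃ₜ ZP',
      ∀ t : Fin m → ℂ, (∀ i, ‖t i‖ = 1) →
        ∀ z w : ZP, (∀ i, (w : Fin m → ℂ) i = t i * (z : Fin m → ℂ) i) →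
          ∀ i, (e w : Fin m → ℂ) i = t i * (e z : Fin m → ℂ) i := by
  subst hP hP'
  obtain rfl : F = _ := funext hF
  obtain rfl : F' = _ := funext hF'
  let Q : GenericPresentation (Fin m) n := ⟨a, b, hPbdd, hPint.mono interior_subset, hgeneric⟩
  let Q' : GenericPresentation (Fin m) n := ⟨a', b', hP'bdd, hP'int.mono interior_subset, hgeneric'⟩
  obtain rfl : ZP = momentAngle (Q.slackMap '' Q.polytope) := by
    subst hZP
    ext z
    exact Q.mem_momentAngle_slackMap_image.symm
  obtain rfl : ZP' = momentAngle (Q'.slackMap '' Q'.polytope) := by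
    subst hZP'
    ext z
    exact Q'.mem_momentAngle_slackMap_image.symm
  have hK (I : Finset (Fin m)) : (Q.face I).Nonempty ↔ (Q'.face I).Nonempty := by
    rw [Q.face_nonempty_iff, Q'.face_nonempty_iff]
    exact Set.ext_iff.mp hKK I
  obtain ⟨h, h₀⟩ := GenericPresentation.exists_homeomorph_slackMap_image hK
  exact exists_equivariant_homeomorph_momentAngle h
    (fun _ => GenericPresentation.nonneg_of_mem_slackMap_image)
    (fun _ => GenericPresentation.nonneg_of_mem_slackMap_image) h₀

/-- Two generic presentations (with `m` inequalities in ℝⁿ each) of bounded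
polytopes `P`, `P'` with nonempty interior producing the same simplicial complex
`K_P = K_{P'}` yield `T^m`-equivariantly homeomorphic moment-angle manifolds `Z_P ≅ Z_{P'}`. -/
theorem ZP_equivariant_homeomorphism_of_combinatorial_equivalence
    (n m : ℕ) (hn : 1 ≤ n) (hm : 1 ≤ m)
    (a : Fin m → (Fin n → ℝ)) (b : Fin m → ℝ)
    (a' : Fin m → (Fin n → ℝ)) (b' : Fin m → ℝ)
    (P P' : Set (Fin n → ℝ))
    (hP : P = {x | ∀ i, 0 ≤ ∑ j, a i j * x j + b i})
    (hP' : P' = {x | ∀ i, 0 ≤ ∑ j, a' i j * x j + b' i})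
    (hPbdd : Bornology.IsBounded P) (hP'bdd : Bornology.IsBounded P')
    (hPint : (interior P).Nonempty) (hP'int : (interior P').Nonempty)
    (hgeneric : ∀ x ∈ P, LinearIndependent ℝ
      (fun i : {i : Fin m // ∑ j, a i j * x j + b i = 0} => a i.1))
    (hgeneric' : ∀ x ∈ P', LinearIndependent ℝ
      (fun i : {i : Fin m // ∑ j, a' i j * x j + b' i = 0} => a' i.1))
    (F F' : Fin m → Set (Fin n → ℝ))
    (hF : ∀ i, F i = {x ∈ P | ∑ j, a i j * x j + b i = 0})
    (hF' : ∀ i, F' i = {x ∈ P' | ∑ j, a' i j * x j + b' i = 0})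
    (hKK : {I : Set (Fin m) | I = ∅ ∨ (⋂ i ∈ I, F i).Nonempty} =
           {I : Set (Fin m) | I = ∅ ∨ (⋂ i ∈ I, F' i).Nonempty})
    (ZP ZP' : Set (Fin m → ℂ))
    (hZP : ZP = {z | ∃ x ∈ P, ∀ i, ‖z i‖ ^ 2 = ∑ j, a i j * x j + b i})
    (hZP' : ZP' = {z | ∃ x ∈ P', ∀ i, ‖z i‖ ^ 2 = ∑ j, a' i j * x j + b' i}) :
    ∃ e : ZP ≃ₜ ZP',
      ∀ t : Fin m → ℂ, (∀ i, ‖t i‖ = 1) →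
        ∀ z w : ZP, (∀ i, (w : Fin m → ℂ) i = t i * (z : Fin m → ℂ) i) →
          ∀ i, (e w : Fin m → ℂ) i = t i * (e z : Fin m → ℂ) i :=
  ZP_equivariant_homeomorphism_of_combinatorial_equivalence_general n m a b a' b' P P' hP hP' hPbdd
    hP'bdd hPint hP'int hgeneric hgeneric' F F' hF hF' hKK ZP ZP' hZP hZP'
end

section
/- Suppose that for every I ∈ K the set of vectors {a_i : i ∈ I} can be extended to a basis of the lattice ℤ^n (the fan is regular). Then the group G acts freely on U(K): if g ∈ G, z ∈ U(K) and g_i z_i = z_i for all i = 1,…,m, then g_i = 1 for all i. -/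
/-!
Write `I` for the zero set of `z`. Off `I` the fixed-point equation `gᵢ zᵢ = zᵢ` forces `gᵢ = 1`.
The defining equations of `G` say that `v ↦ ∏ᵢ gᵢ ^ vᵢ` kills the columns of the matrix `(aᵢⱼ)`,
hence also `(L aᵢ)ᵢ` for every linear form `L` on `ℤⁿ`. Since `{aᵢ : i ∈ I}` is part of a basis,
the coordinate form dual to `a_{i₀}` (for `i₀ ∈ I`) sends `aᵢ` to `δ_{i i₀}` on `I`, so the product
collapses to `g_{i₀} = 1`.
-/

open Finset

theorem zpow_sum {M ι : Type*} [CommGroup M] (x : M) (s : Finset ι) (f : ι → ℤ) :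
    x ^ (∑ i ∈ s, f i) = ∏ i ∈ s, x ^ f i := by
  classical
  induction s using Finset.induction_on with
  | empty => simp
  | insert _ _ h ih => rw [sum_insert h, prod_insert h, zpow_add, ih]

theorem prod_zpow_linearMap_eq_one {M ι κ : Type*} [CommGroup M] [Fintype ι] [Fintype κ]
    (u : ι → M) (a : ι → κ → ℤ) (h : ∀ j, ∏ i, u i ^ a i j = 1)
    (L : (κ → ℤ) →ₗ[ℤ] ℤ) :
    ∏ i, u i ^ L (a i) = 1 := by
  classical
  set c : κ → ℤ := fun j ↦ L fun k ↦ if j = k then 1 else 0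
  calc ∏ i, u i ^ L (a i)
      = ∏ i, ∏ j, (u i ^ a i j) ^ c j := by
        refine prod_congr rfl fun i _ ↦ ?_
        simp only [LinearMap.pi_apply_eq_sum_univ L (a i), smul_eq_mul, zpow_sum, zpow_mul, c]
    _ = ∏ j, (∏ i, u i ^ a i j) ^ c j := by
        rw [prod_comm]
        exact prod_congr rfl fun j _ ↦ prod_zpow _ _ _
    _ = 1 := by simp [h]

theorem eq_one_of_prod_zpow_eq_one_of_basis {M ι κ κ' : Type*} [CommGroup M] [Fintype ι]
    [Fintype κ] (u : ι → M) (a : ι → κ → ℤ) (h : ∀ j, ∏ i, u i ^ a i j = 1)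
    {S : Set ι} (hS : ∀ i ∉ S, u i = 1) (b : Module.Basis κ' ℤ (κ → ℤ)) (f : S → κ')
    (hf : Function.Injective f) (hb : ∀ i : S, b (f i) = a i) :
    ∀ i ∈ S, u i = 1 := by
  classical
  intro i₀ hi₀
  have hcoord (i : ι) (hi : i ∈ S) (hne : i ≠ i₀) : b.coord (f ⟨i₀, hi₀⟩) (a i) = 0 := by
    have hfne : f ⟨i, hi⟩ ≠ f ⟨i₀, hi₀⟩ := fun heq ↦ hne (congrArg Subtype.val (hf heq))
    rw [← hb ⟨i, hi⟩, Module.Basis.coord_apply, Module.Basis.repr_self_apply, if_neg hfne]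
  calc u i₀ = ∏ i, u i ^ b.coord (f ⟨i₀, hi₀⟩) (a i) := by
        rw [prod_eq_single_of_mem i₀ (mem_univ _), ← hb ⟨i₀, hi₀⟩, Module.Basis.coord_apply,
          Module.Basis.repr_self, Finsupp.single_eq_same, zpow_one]
        intro i _ hne
        by_cases hi : i ∈ S
        · rw [hcoord i hi hne, zpow_zero]
        · rw [hS i hi, one_zpow]
    _ = 1 := prod_zpow_linearMap_eq_one u a h _

theorem G_acts_freely_on_UK_of_regular_general (n m : ℕ)
    (a : Fin m → (Fin n → ℤ)) (K : Set (Set (Fin m)))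
    (hreg : ∀ I ∈ K, ∃ (bas : Module.Basis (Fin n) ℤ (Fin n → ℤ)) (f : I → Fin n),
      Function.Injective f ∧ ∀ i : I, bas (f i) = a i.1)
    (g : Fin m → ℂ) (hg0 : ∀ i, g i ≠ 0)
    (hg : ∀ j, ∏ i, g i ^ (a i j) = 1)
    (z : Fin m → ℂ) (hz : {i | z i = 0} ∈ K)
    (hfix : ∀ i, g i * z i = z i) :
    ∀ i, g i = 1 := by
  let u : Fin m → ℂˣ := fun i ↦ Units.mk0 (g i) (hg0 i)
  have hu : ∀ j, ∏ i, u i ^ a i j = 1 := fun j ↦ Units.ext (by simpa [u] using hg j)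
  have hoff : ∀ i ∉ {i | z i = 0}, u i = 1 := fun i hi ↦ Units.ext ((mul_eq_right₀ hi).1 (hfix i))
  obtain ⟨b, f, hf, hb⟩ := hreg _ hz
  intro i
  by_cases hi : z i = 0
  · exact congrArg Units.val (eq_one_of_prod_zpow_eq_one_of_basis u a hu hoff b f hf hb i hi)
  · exact congrArg Units.val (hoff i hi)

/-- If for every `I ∈ K` the vectors `{a i : i ∈ I}` can be extended to a basis
of the lattice `ℤⁿ` (the fan is regular), then the group
`G = {g ∈ (ℂ^×)^m : ∏ᵢ gᵢ^{a_{ij}} = 1 for all j}` acts freely on `U(K)`. -/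
theorem G_acts_freely_on_UK_of_regular (n m : ℕ) (hn : 1 ≤ n) (hm : 1 ≤ m)
    (a : Fin m → (Fin n → ℤ)) (K : Set (Set (Fin m)))
    (hKempty : ∅ ∈ K) (hKdown : ∀ I ∈ K, ∀ J ⊆ I, J ∈ K)
    (hreg : ∀ I ∈ K, ∃ (bas : Module.Basis (Fin n) ℤ (Fin n → ℤ)) (f : I → Fin n),
      Function.Injective f ∧ ∀ i : I, bas (f i) = a i.1)
    (g : Fin m → ℂ) (hg0 : ∀ i, g i ≠ 0)
    (hg : ∀ j, ∏ i, g i ^ (a i j) = 1)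
    (z : Fin m → ℂ) (hz : {i | z i = 0} ∈ K)
    (hfix : ∀ i, g i * z i = z i) :
    ∀ i, g i = 1 :=
  G_acts_freely_on_UK_of_regular_general n m a K hreg g hg0 hg z hz hfix
end
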